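/- arXiv:2102.05970 — 3 statements merged into one kernel-verified Lean document; each statement's English description precedes it below -/
import Mathlib

section
/- Let X be a random variable with E[|X|] < ∞ and let N be a standard normal random variable independent of X; set Y = X + N. If E[X | Y] is almost surely equal to a constant, then X is almost surely constant. -/
/-!
Testing `E[X | Y] = c` against the bounded functions `exp (-(y - Y) ^ 2 / 2)` of `Y` and
integrating out the Gaussian noise gives `E[(X - c) exp (-(y - (X - c)) ^ 2 / 4)] = 0` for all `y`.
With `Z = X - c` and `y = 2t` this says that the tilted moments `E[Z exp (t Z - Z ^ 2 / 4)]`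
vanish for every `t`. If `Z > 0` with positive probability, then for large `t` the contribution
of a slab `{a ≤ Z ≤ b}` with `a > 0` grows like `exp (a t)`, while that of `{Z ≤ 0}` stays
bounded by `e`; hence `Z ≤ 0` almost surely, and `Z ≥ 0` by the symmetry `(Z, t) ↦ (-Z, -t)`.
-/

open MeasureTheory ProbabilityTheory Real Filter Set

lemma exp_neg_sq_div_le_one (x : ℝ) {k : ℝ} (hk : 0 ≤ k) : exp (-x ^ 2 / k) ≤ 1 :=
  exp_le_one_iff.mpr (div_nonpos_of_nonpos_of_nonneg (neg_nonpos.mpr (sq_nonneg x)) hk)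

lemma integral_exp_neg_sub_sq_div_two_gaussianReal (a : ℝ) :
    ∫ n, exp (-(a - n) ^ 2 / 2) ∂gaussianReal 0 1 = exp (-a ^ 2 / 4) / √2 := by
  have h_complete : ∀ n : ℝ, gaussianPDFReal 0 1 n * exp (-(a - n) ^ 2 / 2)
      = ((√(2 * π))⁻¹ * exp (-a ^ 2 / 4)) * exp (-(n - a / 2) ^ 2) := fun n ↦ by
    simp only [gaussianPDFReal, NNReal.coe_one, mul_one, sub_zero]
    rw [mul_assoc, mul_assoc, ← exp_add, ← exp_add]
    ring_nf
  have h_shift : ∫ n : ℝ, exp (-(n - a / 2) ^ 2) = √π := by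
    rw [integral_sub_right_eq_self (fun n ↦ exp (-n ^ 2)) (a / 2)]
    simpa using integral_gaussian 1
  rw [integral_gaussianReal_eq_integral_smul one_ne_zero]
  simp_rw [smul_eq_mul, h_complete, integral_const_mul, h_shift, sqrt_mul zero_le_two]
  field_simp

theorem ProbabilityTheory.IndepFun.integral_comp_eq_integral_integral {Ω α β E : Type*}
    [MeasurableSpace Ω] [MeasurableSpace α] [MeasurableSpace β]
    [NormedAddCommGroup E] [NormedSpace ℝ E]
    {μ : Measure Ω} [IsFiniteMeasure μ] {X : Ω → α} {Y : Ω → β} (hXY : IndepFun X Y μ)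
    (hX : Measurable X) (hY : Measurable Y) {H : α × β → E} (hH : StronglyMeasurable H)
    (hint : Integrable (fun ω ↦ H (X ω, Y ω)) μ) :
    ∫ ω, H (X ω, Y ω) ∂μ = ∫ x, ∫ y, H (x, y) ∂μ.map Y ∂μ.map X := by
  have h_law := (indepFun_iff_map_prod_eq_prod_map_map hX.aemeasurable hY.aemeasurable).mp hXY
  have h_meas : AEMeasurable (fun ω ↦ (X ω, Y ω)) μ := (hX.prodMk hY).aemeasurable
  rw [← integral_map h_meas hH.aestronglyMeasurable, h_law, integral_prod]
  rwa [← h_law, integrable_map_measure hH.aestronglyMeasurable h_meas]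

lemma integral_mul_exp_neg_sq_add_gaussian {Ω : Type*} [MeasurableSpace Ω] {μ : Measure Ω}
    [IsFiniteMeasure μ] {X N : Ω → ℝ} (hX : Measurable X) (hN : Measurable N)
    (hN_law : μ.map N = gaussianReal 0 1) (hXN : IndepFun X N μ) {h : ℝ → ℝ}
    (hh : Measurable h) (hint : Integrable (fun ω ↦ h (X ω)) μ) (y : ℝ) :
    ∫ ω, h (X ω) * exp (-(y - (X ω + N ω)) ^ 2 / 2) ∂μ
      = (∫ ω, h (X ω) * exp (-(y - X ω) ^ 2 / 4) ∂μ) / √2 := by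
  have h_bound : ∀ x n : ℝ, ‖h x * exp (-(y - (x + n)) ^ 2 / 2)‖ ≤ ‖h x‖ := fun x n ↦ by
    rw [norm_mul, norm_of_nonneg (exp_nonneg _)]
    exact mul_le_of_le_one_right (norm_nonneg _) (exp_neg_sq_div_le_one _ zero_le_two)
  have h_inner : ∀ x, ∫ n, h x * exp (-(y - (x + n)) ^ 2 / 2) ∂gaussianReal 0 1
      = h x * exp (-(y - x) ^ 2 / 4) / √2 := fun x ↦ by
    simp_rw [integral_const_mul, ← sub_sub, integral_exp_neg_sub_sq_div_two_gaussianReal,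
      mul_div_assoc]
  rw [hXN.integral_comp_eq_integral_integral
    (H := fun p ↦ h p.1 * exp (-(y - (p.1 + p.2)) ^ 2 / 2)) hX hN (by fun_prop)
    (hint.norm.mono' (by fun_prop) (ae_of_all _ fun ω ↦ h_bound _ _)), hN_law]
  simp only [h_inner]
  rw [integral_map hX.aemeasurable (by fun_prop), integral_div]

lemma integral_sub_mul_eq_zero_of_condExp_ae_eq_const {Ω : Type*} {m m₀ : MeasurableSpace Ω}
    {μ : Measure Ω} [IsFiniteMeasure μ] (hm : m ≤ m₀) {X g : Ω → ℝ} {c C : ℝ}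
    (hX : Integrable X μ) (hg : StronglyMeasurable[m] g) (hg_bound : ∀ ω, ‖g ω‖ ≤ C)
    (hc : μ[X | m] =ᵐ[μ] fun _ ↦ c) :
    ∫ ω, (X ω - c) * g ω ∂μ = 0 := by
  have hg_int : Integrable g μ :=
    (integrable_const C).mono' (hg.mono hm).aestronglyMeasurable (ae_of_all _ hg_bound)
  have h_pull : ∫ ω, g ω * X ω ∂μ = ∫ ω, g ω * c ∂μ := calc
    ∫ ω, g ω * X ω ∂μ = ∫ ω, μ[g * X | m] ω ∂μ := (integral_condExp hm).symm
    _ = ∫ ω, g ω * c ∂μ := integral_congr_ae <|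
        (condExp_stronglyMeasurable_mul_of_bound hm hg hX C (ae_of_all _ hg_bound)).trans
          (hc.mono fun ω hω ↦ by simp [hω])
  have hgX_int : Integrable (fun ω ↦ g ω * X ω) μ :=
    hX.bdd_mul (hg.mono hm).aestronglyMeasurable (ae_of_all _ hg_bound)
  calc ∫ ω, (X ω - c) * g ω ∂μ = ∫ ω, g ω * X ω ∂μ - ∫ ω, g ω * c ∂μ := by
        rw [← integral_sub hgX_int (hg_int.mul_const c)]
        congr with ω
        ring
    _ = 0 := by rw [h_pull, sub_self]

section TiltedMoments

variable {Ω : Type*} [MeasurableSpace Ω] {ν : Measure Ω} {Z : Ω → ℝ}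

lemma abs_mul_exp_le_exp_abs_add (z s : ℝ) : |z| * exp s ≤ exp (|z| + s) := by
  rw [exp_add]
  gcongr
  linarith [add_one_le_exp |z|]

lemma integrable_mul_exp_mul_sub_sq [IsFiniteMeasure ν] (hZ : Measurable Z) (t : ℝ) :
    Integrable (fun ω ↦ Z ω * exp (Z ω * t - Z ω ^ 2 / 4)) ν := by
  refine Integrable.mono' (integrable_const (exp ((1 + |t|) ^ 2))) (by fun_prop)
    (ae_of_all _ fun ω ↦ ?_)
  rw [norm_mul, norm_of_nonneg (exp_nonneg _), Real.norm_eq_abs]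
  refine (abs_mul_exp_le_exp_abs_add _ _).trans (exp_le_exp.mpr ?_)
  have hzt : Z ω * t ≤ |Z ω| * |t| := abs_mul (Z ω) t ▸ le_abs_self _
  nlinarith [sq_abs (Z ω), sq_nonneg (|Z ω| / 2 - (1 + |t|))]

lemma norm_mul_exp_mul_sub_sq_le {z t : ℝ} (hz : z ≤ 0) (ht : 0 ≤ t) :
    ‖z * exp (z * t - z ^ 2 / 4)‖ ≤ exp 1 := by
  rw [norm_mul, norm_of_nonneg (exp_nonneg _), Real.norm_eq_abs]
  refine (abs_mul_exp_le_exp_abs_add _ _).trans (exp_le_exp.mpr ?_)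
  nlinarith [sq_abs z, sq_nonneg (|z| / 2 - 1), mul_nonpos_of_nonpos_of_nonneg hz ht]

lemma exists_measure_Icc_ne_zero (hZ : ν {ω | 0 < Z ω} ≠ 0) :
    ∃ a b : ℝ, 0 < a ∧ ν {ω | Z ω ∈ Icc a b} ≠ 0 := by
  by_contra! h
  refine hZ (measure_mono_null (fun ω (hω : 0 < Z ω) ↦ ?_)
    (measure_iUnion_null fun n : ℕ ↦ h (n + 1)⁻¹ (n + 1) (by positivity)))
  obtain ⟨n, hn⟩ := exists_nat_ge (max (Z ω)⁻¹ (Z ω))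
  rw [max_le_iff] at hn
  exact mem_iUnion.mpr ⟨n, (inv_le_comm₀ (by positivity) hω).mpr (by linarith), by linarith⟩

lemma measure_pos_eq_zero_of_integral_mul_exp_eq_zero [IsFiniteMeasure ν] (hZ : Measurable Z)
    (h : ∀ t, ∫ ω, Z ω * exp (Z ω * t - Z ω ^ 2 / 4) ∂ν = 0) : ν {ω | 0 < Z ω} = 0 := by
  by_contra hpos
  obtain ⟨a, b, ha, hS⟩ := exists_measure_Icc_ne_zero hpos
  set S := {ω | Z ω ∈ Icc a b}
  set P := {ω | 0 < Z ω}
  have hP : MeasurableSet P := measurableSet_lt measurable_const hZ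
  have hS_pos : 0 < ν.real S := ENNReal.toReal_pos hS (measure_ne_top ν S)
  have bound : ∀ t, 0 ≤ t → ν.real S * (a * exp (a * t - b ^ 2 / 4)) ≤ exp 1 * ν.real univ := by
    intro t ht
    have hint := integrable_mul_exp_mul_sub_sq (ν := ν) hZ t
    calc ν.real S * (a * exp (a * t - b ^ 2 / 4))
        ≤ ∫ ω in S, Z ω * exp (Z ω * t - Z ω ^ 2 / 4) ∂ν := by
          rw [mul_comm]
          refine setIntegral_ge_of_const_le_real (hZ measurableSet_Icc) (measure_ne_top ν S)
            (fun ω ⟨haz, hzb⟩ ↦ ?_) hint.integrableOn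
          gcongr
          · linarith
          · nlinarith
      _ ≤ ∫ ω in P, Z ω * exp (Z ω * t - Z ω ^ 2 / 4) ∂ν := by
          refine setIntegral_mono_set hint.integrableOn ?_
            (ae_of_all _ fun ω (hω : Z ω ∈ Icc a b) ↦ ha.trans_le hω.1)
          filter_upwards [ae_restrict_mem hP] with ω (hω : 0 < Z ω)
          positivity
      _ = -∫ ω in Pᶜ, Z ω * exp (Z ω * t - Z ω ^ 2 / 4) ∂ν := by
          linarith [integral_add_compl hP hint, h t]
      _ ≤ exp 1 * ν.real Pᶜ := by
          refine (neg_le_abs _).trans (norm_setIntegral_le_of_norm_le_const (measure_lt_top ν _)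
            fun ω (hω : ¬ 0 < Z ω) ↦ norm_mul_exp_mul_sub_sq_le (not_lt.mp hω) ht)
      _ ≤ exp 1 * ν.real univ := by gcongr <;> simp
  have h_tendsto : Tendsto (fun t ↦ ν.real S * (a * exp (a * t - b ^ 2 / 4))) atTop atTop :=
    ((tendsto_exp_atTop.comp (tendsto_atTop_add_const_right _ _
      (tendsto_id.const_mul_atTop ha))).const_mul_atTop ha).const_mul_atTop hS_pos
  obtain ⟨t, ht_large, ht⟩ :=
    ((h_tendsto.eventually_gt_atTop (exp 1 * ν.real univ)).and (eventually_ge_atTop 0)).exists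
  exact (bound t ht).not_gt ht_large

lemma ae_eq_zero_of_integral_mul_exp_eq_zero [IsFiniteMeasure ν] (hZ : Measurable Z)
    (h : ∀ t, ∫ ω, Z ω * exp (Z ω * t - Z ω ^ 2 / 4) ∂ν = 0) : Z =ᵐ[ν] 0 := by
  have h_neg : ν {ω | 0 < -Z ω} = 0 := by
    refine measure_pos_eq_zero_of_integral_mul_exp_eq_zero hZ.neg fun t ↦ ?_
    simpa [integral_neg, neg_mul_neg] using h (-t)
  have h_pos := measure_pos_eq_zero_of_integral_mul_exp_eq_zero hZ h
  filter_upwards [measure_eq_zero_iff_ae_notMem.mp h_pos, measure_eq_zero_iff_ae_notMem.mp h_neg]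
    with ω hpos hneg
  simp only [not_lt, neg_nonpos] at hpos hneg
  exact le_antisymm hpos hneg

lemma ae_eq_zero_of_integral_mul_exp_neg_sq_eq_zero [IsFiniteMeasure ν] (hZ : Measurable Z)
    (h : ∀ y, ∫ ω, Z ω * exp (-(y - Z ω) ^ 2 / 4) ∂ν = 0) : Z =ᵐ[ν] 0 := by
  refine ae_eq_zero_of_integral_mul_exp_eq_zero hZ fun t ↦ ?_
  have h_factor : ∀ z : ℝ, z * exp (-(2 * t - z) ^ 2 / 4)
      = exp (-t ^ 2) * (z * exp (z * t - z ^ 2 / 4)) := fun z ↦ by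
    rw [mul_left_comm, ← exp_add]
    ring_nf
  have h2t := h (2 * t)
  simp_rw [h_factor, integral_const_mul] at h2t
  exact (mul_eq_zero.mp h2t).resolve_left (exp_ne_zero _)

end TiltedMoments

/-- **Constant conditional expectation forces a constant input.**
For the scalar Gaussian channel `Y = X + N` with `X` integrable and `N ~ N(0,1)`
independent of `X`, if `E[X | Y]` is almost surely equal to a constant, then `X`
is almost surely constant. -/
theorem constant_conditional_expectation_implies_constant
    {Ω : Type*} [MeasurableSpace Ω] (μ : Measure Ω) [IsProbabilityMeasure μ]
    (X N : Ω → ℝ) (hXmeas : Measurable X) (hNmeas : Measurable N)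
    (hXint : Integrable X μ)
    (hN : Measure.map N μ = gaussianReal 0 1)
    (hindep : IndepFun X N μ)
    (c : ℝ)
    (hconst : μ[X | MeasurableSpace.comap (fun ω => X ω + N ω) inferInstance]
        =ᵐ[μ] fun _ => c) :
    ∃ c' : ℝ, X =ᵐ[μ] fun _ => c' := by
  have h_orth : ∀ y, ∫ ω, (X ω - c) * exp (-(y - (X ω + N ω)) ^ 2 / 2) ∂μ = 0 := fun y ↦
    integral_sub_mul_eq_zero_of_condExp_ae_eq_const (hXmeas.add hNmeas).comap_le hXint
      ((by fun_prop : Measurable fun v ↦ exp (-(y - v) ^ 2 / 2)).comp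
        (comap_measurable _)).stronglyMeasurable
      (fun ω ↦ (norm_of_nonneg (exp_nonneg _)).trans_le (exp_neg_sq_div_le_one _ zero_le_two))
      hconst
  have h_smooth : ∀ y, ∫ ω, (X ω - c) * exp (-(y - (X ω - c)) ^ 2 / 4) ∂μ = 0 := fun y ↦ by
    have h_conv := integral_mul_exp_neg_sq_add_gaussian hXmeas hNmeas hN hindep
      (h := fun x ↦ x - c) (by fun_prop) (hXint.sub (integrable_const c)) (y + c)
    rw [h_orth, eq_comm, div_eq_zero_iff, or_iff_left (by positivity)] at h_conv
    simpa only [sub_sub_eq_add_sub] using h_conv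
  exact ⟨c, (ae_eq_zero_of_integral_mul_exp_neg_sq_eq_zero (hXmeas.sub_const c) h_smooth).mono
    fun ω hω ↦ sub_eq_zero.mp hω⟩
end

section
/- Let X be a random variable with E[|X|] < ∞ and N ~ N(0,1) independent of X, and set Y = X + N. Define f(y) := E[X e^{−(X−y)²/2}] / E[e^{−(X−y)²/2}] (which equals E[X | Y = y]) and g₂(y) := E[(X − f(y))² e^{−(X−y)²/2}] / E[e^{−(X−y)²/2}] (which equals the conditional variance Var[X | Y = y]). Then f is differentiable on ℝ and f′(y) = g₂(y) for every y ∈ ℝ. -/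
/-!
The `y`-derivative of the Gaussian weight `e^{-(x-y)²/2}` is `(x - y) e^{-(x-y)²/2}`, and
`|x - y| e^{-(x-y)²/2} ≤ 1`, so both `A(y) = E[e^{-(X-y)²/2}]` and `B(y) = E[X e^{-(X-y)²/2}]`
can be differentiated under the integral sign with the integrable dominating functions `1` and
`|X|`. The quotient rule gives `f' = (B' A - B A') / A²`. Expanding
`(x - m)² = x (x - y) - m (x - y) + (y - m) (x - m)` with `m = f(y) = B / A` turns the numerator
of `g₂(y)` into `B' - m A' + (y - m) (B - m A) = B' - m A'`, which is `A f'(y)`.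
-/

open MeasureTheory ProbabilityTheory Real Filter

lemma exp_neg_sq_div_two_le_one (t : ℝ) : exp (-t ^ 2 / 2) ≤ 1 :=
  exp_le_one_iff.mpr (by nlinarith [sq_nonneg t])

lemma abs_mul_exp_neg_sq_div_two_le_one (t : ℝ) : |t| * exp (-t ^ 2 / 2) ≤ 1 := by
  rw [neg_div, exp_neg, mul_inv_le_iff₀ (exp_pos _), one_mul]
  nlinarith [add_one_le_exp (t ^ 2 / 2), sq_nonneg (|t| - 1), sq_abs t]

lemma hasDerivAt_exp_neg_sub_sq_div_two (c x : ℝ) :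
    HasDerivAt (fun x ↦ exp (-(c - x) ^ 2 / 2)) ((c - x) * exp (-(c - x) ^ 2 / 2)) x := by
  refine ((((hasDerivAt_id' x).const_sub c).pow 2).neg.div_const 2).exp.congr_deriv ?_
  simp only [Pi.neg_apply, Pi.pow_apply, Nat.cast_ofNat]
  ring

section GaussianSmoothing

variable {Ω : Type*} [MeasurableSpace Ω] {μ : Measure Ω} {X W : Ω → ℝ}

lemma MeasureTheory.Integrable.mul_exp_neg_sub_sq_div_two (hW : Integrable W μ)
    (hX : AEStronglyMeasurable X μ) (y : ℝ) :
    Integrable (fun ω ↦ W ω * exp (-(X ω - y) ^ 2 / 2)) μ := by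
  refine hW.mul_bdd (c := 1) ?_ (.of_forall fun ω ↦ ?_)
  · exact (by fun_prop : Continuous fun x ↦ exp (-(x - y) ^ 2 / 2)).comp_aestronglyMeasurable hX
  · rw [norm_of_nonneg (exp_pos _).le]
    exact exp_neg_sq_div_two_le_one _

lemma hasDerivAt_integral_mul_exp_neg_sub_sq_div_two (hW : Integrable W μ)
    (hX : AEStronglyMeasurable X μ) (y : ℝ) :
    Integrable (fun ω ↦ W ω * ((X ω - y) * exp (-(X ω - y) ^ 2 / 2))) μ ∧
    HasDerivAt (fun t ↦ ∫ ω, W ω * exp (-(X ω - t) ^ 2 / 2) ∂μ)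
      (∫ ω, W ω * ((X ω - y) * exp (-(X ω - y) ^ 2 / 2)) ∂μ) y := by
  have hderiv_le (ω : Ω) (t : ℝ) :
      ‖W ω * ((X ω - t) * exp (-(X ω - t) ^ 2 / 2))‖ ≤ |W ω| := by
    rw [norm_mul, norm_mul, norm_of_nonneg (exp_pos _).le, Real.norm_eq_abs, Real.norm_eq_abs]
    exact mul_le_of_le_one_right (abs_nonneg _) (abs_mul_exp_neg_sq_div_two_le_one _)
  exact hasDerivAt_integral_of_dominated_loc_of_deriv_le
    (F := fun t ω ↦ W ω * exp (-(X ω - t) ^ 2 / 2))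
    (F' := fun t ω ↦ W ω * ((X ω - t) * exp (-(X ω - t) ^ 2 / 2)))
    (bound := fun ω ↦ |W ω|)
    univ_mem (.of_forall fun t ↦ (hW.mul_exp_neg_sub_sq_div_two hX t).aestronglyMeasurable)
    (hW.mul_exp_neg_sub_sq_div_two hX y)
    (hW.aestronglyMeasurable.mul
      ((by fun_prop : Continuous fun x ↦ (x - y) * exp (-(x - y) ^ 2 / 2))
        |>.comp_aestronglyMeasurable hX))
    (.of_forall fun ω t _ ↦ hderiv_le ω t) hW.abs
    (.of_forall fun ω t _ ↦ (hasDerivAt_exp_neg_sub_sq_div_two (X ω) t).const_mul (W ω))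

lemma integrable_exp_neg_sub_sq_div_two [IsFiniteMeasure μ] (hX : AEStronglyMeasurable X μ)
    (y : ℝ) : Integrable (fun ω ↦ exp (-(X ω - y) ^ 2 / 2)) μ := by
  simpa only [one_mul] using (integrable_const (1 : ℝ)).mul_exp_neg_sub_sq_div_two hX y

lemma hasDerivAt_integral_exp_neg_sub_sq_div_two [IsFiniteMeasure μ]
    (hX : AEStronglyMeasurable X μ) (y : ℝ) :
    Integrable (fun ω ↦ (X ω - y) * exp (-(X ω - y) ^ 2 / 2)) μ ∧
    HasDerivAt (fun t ↦ ∫ ω, exp (-(X ω - t) ^ 2 / 2) ∂μ)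
      (∫ ω, (X ω - y) * exp (-(X ω - y) ^ 2 / 2) ∂μ) y := by
  simpa only [one_mul] using
    hasDerivAt_integral_mul_exp_neg_sub_sq_div_two (integrable_const (1 : ℝ)) hX y

lemma integral_sub_sq_mul_exp_neg_sub_sq_div_two [IsFiniteMeasure μ] (hX : Integrable X μ)
    (y m : ℝ) :
    ∫ ω, (X ω - m) ^ 2 * exp (-(X ω - y) ^ 2 / 2) ∂μ =
      (∫ ω, X ω * ((X ω - y) * exp (-(X ω - y) ^ 2 / 2)) ∂μ)
        - m * (∫ ω, (X ω - y) * exp (-(X ω - y) ^ 2 / 2) ∂μ)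
        + (y - m) * ((∫ ω, X ω * exp (-(X ω - y) ^ 2 / 2) ∂μ)
          - m * ∫ ω, exp (-(X ω - y) ^ 2 / 2) ∂μ) := by
  have hX' := hX.aestronglyMeasurable
  have hE := integrable_exp_neg_sub_sq_div_two hX' y
  have hXE := hX.mul_exp_neg_sub_sq_div_two hX' y
  have hE' := (hasDerivAt_integral_exp_neg_sub_sq_div_two hX' y).1
  have hXE' := (hasDerivAt_integral_mul_exp_neg_sub_sq_div_two hX hX' y).1
  calc _ = ∫ ω, (X ω * ((X ω - y) * exp (-(X ω - y) ^ 2 / 2))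
          - m * ((X ω - y) * exp (-(X ω - y) ^ 2 / 2)))
          + (y - m) * (X ω * exp (-(X ω - y) ^ 2 / 2) - m * exp (-(X ω - y) ^ 2 / 2)) ∂μ := by
        congr 1 with ω
        ring
    _ = _ := by
        rw [integral_add (hXE'.sub' (hE'.const_mul m)) ((hXE.sub' (hE.const_mul m)).const_mul _),
          integral_sub hXE' (hE'.const_mul m), integral_const_mul, integral_const_mul,
          integral_sub hXE (hE.const_mul m), integral_const_mul]

end GaussianSmoothing

theorem hasDerivAt_condexp_eq_condVar_general
    {Ω : Type*} [MeasurableSpace Ω] (μ : Measure Ω) [IsProbabilityMeasure μ]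
    (X : Ω → ℝ)
    (hXint : Integrable X μ)
    (f g₂ : ℝ → ℝ)
    (hf : ∀ y, f y = (∫ ω, X ω * Real.exp (-(X ω - y) ^ 2 / 2) ∂μ) /
        (∫ ω, Real.exp (-(X ω - y) ^ 2 / 2) ∂μ))
    (hg₂ : ∀ y, g₂ y = (∫ ω, (X ω - f y) ^ 2 * Real.exp (-(X ω - y) ^ 2 / 2) ∂μ) /
        (∫ ω, Real.exp (-(X ω - y) ^ 2 / 2) ∂μ)) :
    ∀ y : ℝ, HasDerivAt f (g₂ y) y := by
  intro y
  have hX := hXint.aestronglyMeasurable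
  have hnum := (hasDerivAt_integral_mul_exp_neg_sub_sq_div_two hXint hX y).2
  have hden := (hasDerivAt_integral_exp_neg_sub_sq_div_two (μ := μ) hX y).2
  have hden_pos : 0 < ∫ ω, exp (-(X ω - y) ^ 2 / 2) ∂μ :=
    integral_exp_pos (integrable_exp_neg_sub_sq_div_two hX y)
  rw [funext hf]
  refine (hnum.div hden hden_pos.ne').congr_deriv ?_
  rw [hg₂, hf, integral_sub_sq_mul_exp_neg_sub_sq_div_two hXint]
  generalize (∫ ω, X ω * ((X ω - y) * exp (-(X ω - y) ^ 2 / 2)) ∂μ) = B'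
  generalize (∫ ω, (X ω - y) * exp (-(X ω - y) ^ 2 / 2) ∂μ) = A'
  generalize (∫ ω, X ω * exp (-(X ω - y) ^ 2 / 2) ∂μ) = B
  generalize (∫ ω, exp (-(X ω - y) ^ 2 / 2) ∂μ) = A at hden_pos ⊢
  field_simp
  ring

/-- **First derivative of the conditional expectation is the conditional variance.**
For the scalar Gaussian channel `Y = X + N` with `X` integrable and `N ~ N(0,1)`
independent of `X`, define (via the Gaussian-smoothing formula)
`f y = E[X | Y = y]` and `g₂ y = Var[X | Y = y]`. Then `f` is differentiable on `ℝ`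
with `f' = g₂`. -/
theorem hasDerivAt_condexp_eq_condVar
    {Ω : Type*} [MeasurableSpace Ω] (μ : Measure Ω) [IsProbabilityMeasure μ]
    (X N : Ω → ℝ) (hXmeas : Measurable X) (hNmeas : Measurable N)
    (hXint : Integrable X μ)
    (hN : Measure.map N μ = gaussianReal 0 1)
    (hindep : IndepFun X N μ)
    (f g₂ : ℝ → ℝ)
    (hf : ∀ y, f y = (∫ ω, X ω * Real.exp (-(X ω - y) ^ 2 / 2) ∂μ) /
        (∫ ω, Real.exp (-(X ω - y) ^ 2 / 2) ∂μ))
    (hg₂ : ∀ y, g₂ y = (∫ ω, (X ω - f y) ^ 2 * Real.exp (-(X ω - y) ^ 2 / 2) ∂μ) /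
        (∫ ω, Real.exp (-(X ω - y) ^ 2 / 2) ∂μ)) :
    ∀ y : ℝ, HasDerivAt f (g₂ y) y :=
  hasDerivAt_condexp_eq_condVar_general μ X hXint f g₂ hf hg₂
end

section
/- Let X be a random variable with E[|X|] < ∞ and N ~ N(0,1) independent of X, and set Y = X + N. Define f(y) := E[X e^{−(X−y)²/2}] / E[e^{−(X−y)²/2}] and g_k(y) := E[(X − f(y))^k e^{−(X−y)²/2}] / E[e^{−(X−y)²/2}] for k ≥ 0. Then f is infinitely differentiable and, for every y ∈ ℝ: f″(y) = g₃(y), f‴(y) = g₄(y) − 3 g₂(y)², and f⁗(y) = g₅(y) − 10 g₂(y) g₃(y). -/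
open MeasureTheory ProbabilityTheory Real Filter

set_option linter.unusedSectionVars false
set_option linter.unusedVariables false
set_option maxHeartbeats 1000000

private lemma aux_pow_mul_exp_le (k : ℕ) (t : ℝ) :
    |t| ^ k * Real.exp (-t ^ 2 / 2) ≤ (k.factorial : ℝ) * 2 ^ k + 1 := by
  have hfac : (1:ℝ) ≤ (k.factorial : ℝ) * 2 ^ k := by
    have h1 : (1:ℝ) ≤ (k.factorial : ℝ) := by exact_mod_cast k.factorial_pos
    have h2 : (1:ℝ) ≤ 2 ^ k := one_le_pow₀ (by norm_num)
    nlinarith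
  rcases le_total (|t|) 1 with h | h
  · have h1 : |t| ^ k ≤ 1 := pow_le_one₀ (abs_nonneg t) h
    have h2 : Real.exp (-t ^ 2 / 2) ≤ 1 := Real.exp_le_one_iff.mpr (by nlinarith [sq_nonneg t])
    nlinarith [Real.exp_pos (-t^2/2), pow_nonneg (abs_nonneg t) k]
  · have h1 : |t| ^ k ≤ |t| ^ (2 * k) := pow_le_pow_right₀ h (by omega)
    have h2 : |t| ^ (2 * k) = (t ^ 2) ^ k := by rw [pow_mul, sq_abs]
    have h3 : (t ^ 2 / 2) ^ k / (k.factorial : ℝ) ≤ Real.exp (t ^ 2 / 2) :=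
      Real.pow_div_factorial_le_exp (x := t ^ 2 / 2) (by positivity) k
    have h4 : (t ^ 2) ^ k ≤ ((k.factorial : ℝ) * 2 ^ k) * Real.exp (t ^ 2 / 2) := by
      have hk : (0:ℝ) < (k.factorial : ℝ) := by exact_mod_cast k.factorial_pos
      have := mul_le_mul_of_nonneg_left h3 (le_of_lt (by positivity : (0:ℝ) < (k.factorial : ℝ) * 2 ^ k))
      calc (t ^ 2) ^ k = ((k.factorial : ℝ) * 2 ^ k) * ((t ^ 2 / 2) ^ k / (k.factorial : ℝ)) := by
              rw [div_pow]; field_simp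
        _ ≤ _ := this
    have h5 : Real.exp (-t ^ 2 / 2) * Real.exp (t ^ 2 / 2) = 1 := by
      rw [← Real.exp_add]; ring_nf; exact Real.exp_zero
    have h6 : Real.exp (-t ^ 2 / 2) > 0 := Real.exp_pos _
    nlinarith [h1, h2, h4, mul_le_mul_of_nonneg_right (h1.trans_eq h2) h6.le]

private lemma aux_shift_bound (k : ℕ) (R : ℝ) (hR : 0 ≤ R) (x a : ℝ) (ha : |a| ≤ R) :
    |x| ^ k * Real.exp (-(x - a) ^ 2 / 2) ≤
      2 ^ k * (((k.factorial : ℝ) * 2 ^ k + 1) + R ^ k) := by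
  have h0 : |x| ≤ |x - a| + R := by
    have := abs_sub_abs_le_abs_sub x (x - a)
    have h' : x - (x - a) = a := by ring
    rw [h'] at this
    linarith
  have h1 : |x| ^ k ≤ (|x - a| + R) ^ k :=
    pow_le_pow_left₀ (abs_nonneg x) h0 k
  have h2 : (|x - a| + R) ^ k ≤ 2 ^ k * (|x - a| ^ k + R ^ k) := by
    refine (add_pow_le (abs_nonneg _) hR k).trans ?_
    have : (2:ℝ) ^ (k - 1) ≤ 2 ^ k := pow_le_pow_right₀ (by norm_num) (Nat.sub_le k 1)
    have hpos : (0:ℝ) ≤ |x - a| ^ k + R ^ k := by positivity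
    nlinarith
  have hE : Real.exp (-(x - a) ^ 2 / 2) ≤ 1 := Real.exp_le_one_iff.mpr (by nlinarith [sq_nonneg (x - a)])
  have hEpos := Real.exp_pos (-(x - a) ^ 2 / 2)
  have h3 : |x - a| ^ k * Real.exp (-(x - a) ^ 2 / 2) ≤ (k.factorial : ℝ) * 2 ^ k + 1 :=
    aux_pow_mul_exp_le k (x - a)
  have h4 : R ^ k * Real.exp (-(x - a) ^ 2 / 2) ≤ R ^ k := by
    nlinarith [pow_nonneg hR k]
  calc |x| ^ k * Real.exp (-(x - a) ^ 2 / 2)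
      ≤ (2 ^ k * (|x - a| ^ k + R ^ k)) * Real.exp (-(x - a) ^ 2 / 2) := by
        exact mul_le_mul_of_nonneg_right (h1.trans h2) hEpos.le
    _ = 2 ^ k * (|x - a| ^ k * Real.exp (-(x - a) ^ 2 / 2) + R ^ k * Real.exp (-(x - a) ^ 2 / 2)) := by ring
    _ ≤ _ := by
        have : (0:ℝ) ≤ (2:ℝ) ^ k := by positivity
        nlinarith [h3, h4]

private lemma aux_norm_integrand (k : ℕ) (x : ℝ) (z : ℂ) :
    ‖(x : ℂ) ^ k * ((x : ℂ) - z) * Complex.exp (-((x : ℂ) - z) ^ 2 / 2)‖ ≤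
      ((|x| + |z.re|) + |z.im|) *
        (|x| ^ k * (Real.exp (z.im ^ 2 / 2) * Real.exp (-(x - z.re) ^ 2 / 2))) := by
  have hre : ((-((x : ℂ) - z) ^ 2 / 2)).re = -((x - z.re) ^ 2 - z.im ^ 2) / 2 := by
    simp [Complex.div_re, Complex.normSq, pow_two, Complex.mul_re, Complex.mul_im, Complex.sub_re,
      Complex.sub_im, Complex.ofReal_re, Complex.ofReal_im]
  have hnexp : ‖Complex.exp (-((x : ℂ) - z) ^ 2 / 2)‖
      = Real.exp (z.im ^ 2 / 2) * Real.exp (-(x - z.re) ^ 2 / 2) := by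
    rw [Complex.norm_exp, hre, ← Real.exp_add]
    congr 1
    ring
  have hnx : ‖(x : ℂ) ^ k‖ = |x| ^ k := by
    rw [norm_pow, Complex.norm_real, Real.norm_eq_abs]
  have hnsub : ‖(x : ℂ) - z‖ ≤ (|x| + |z.re|) + |z.im| := by
    calc ‖(x : ℂ) - z‖ ≤ |((x:ℂ) - z).re| + |((x:ℂ) - z).im| := Complex.norm_le_abs_re_add_abs_im _
      _ ≤ (|x| + |z.re|) + |z.im| := by
          simp only [Complex.sub_re, Complex.sub_im, Complex.ofReal_re, Complex.ofReal_im,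
            zero_sub, abs_neg]
          have h := abs_sub x z.re
          linarith
  rw [norm_mul, norm_mul, hnx, hnexp]
  calc |x| ^ k * ‖(x : ℂ) - z‖ * (Real.exp (z.im ^ 2 / 2) * Real.exp (-(x - z.re) ^ 2 / 2))
      = ‖(x : ℂ) - z‖ * (|x| ^ k * (Real.exp (z.im ^ 2 / 2) * Real.exp (-(x - z.re) ^ 2 / 2))) := by
        ring
    _ ≤ _ := mul_le_mul_of_nonneg_right hnsub (by positivity)

private lemma aux_bound_main (k : ℕ) (R : ℝ) (hR : 1 ≤ R) (x a b : ℝ)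
    (ha : |a| ≤ R) (hb : |b| ≤ R) :
    ((|x| + |a|) + |b|) * (|x| ^ k * (Real.exp (b ^ 2 / 2) * Real.exp (-(x - a) ^ 2 / 2)))
      ≤ Real.exp (R ^ 2 / 2) *
        ((2 ^ (k+1) * (((k+1).factorial * 2 ^ (k+1) + 1) + R ^ (k+1)))
          + 2 * R * (2 ^ k * (((k.factorial : ℝ) * 2 ^ k + 1) + R ^ k))) := by
  have hR0 : (0:ℝ) ≤ R := by linarith
  set E := Real.exp (-(x - a) ^ 2 / 2) with hE
  have hEpos : 0 < E := Real.exp_pos _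
  have h1 : |x| ^ (k+1) * E ≤ 2 ^ (k+1) * ((((k+1).factorial : ℝ) * 2 ^ (k+1) + 1) + R ^ (k+1)) :=
    aux_shift_bound (k+1) R hR0 x a ha
  have h2 : |x| ^ k * E ≤ 2 ^ k * (((k.factorial : ℝ) * 2 ^ k + 1) + R ^ k) :=
    aux_shift_bound k R hR0 x a ha
  have hexpb : Real.exp (b ^ 2 / 2) ≤ Real.exp (R ^ 2 / 2) := by
    apply Real.exp_le_exp.mpr
    have : b ^ 2 ≤ R ^ 2 := by nlinarith [abs_nonneg b, neg_abs_le b, le_abs_self b]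
    linarith
  have hab : |a| + |b| ≤ 2 * R := by linarith
  have hS1 : (0:ℝ) ≤ 2 ^ (k+1) * ((((k+1).factorial : ℝ) * 2 ^ (k+1) + 1) + R ^ (k+1)) :=
    le_trans (by positivity) h1
  have hS0 : (0:ℝ) ≤ 2 ^ k * (((k.factorial : ℝ) * 2 ^ k + 1) + R ^ k) :=
    le_trans (by positivity) h2
  have hpow : |x| * |x| ^ k = |x| ^ (k+1) := by rw [pow_succ]; ring
  have key : ((|x| + |a|) + |b|) * (|x| ^ k * E)
      ≤ (2 ^ (k+1) * ((((k+1).factorial : ℝ) * 2 ^ (k+1) + 1) + R ^ (k+1)))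
        + 2 * R * (2 ^ k * (((k.factorial : ℝ) * 2 ^ k + 1) + R ^ k)) := by
    have e1 : ((|x| + |a|) + |b|) * (|x| ^ k * E)
        = |x| ^ (k+1) * E + (|a| + |b|) * (|x| ^ k * E) := by
      rw [← hpow]; ring
    rw [e1]
    have h3 : (|a| + |b|) * (|x| ^ k * E) ≤ 2 * R * (2 ^ k * (((k.factorial : ℝ) * 2 ^ k + 1) + R ^ k)) :=
      mul_le_mul hab h2 (by positivity) (by linarith)
    linarith
  calc ((|x| + |a|) + |b|) * (|x| ^ k * (Real.exp (b ^ 2 / 2) * E))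
      = Real.exp (b ^ 2 / 2) * (((|x| + |a|) + |b|) * (|x| ^ k * E)) := by ring
    _ ≤ Real.exp (R ^ 2 / 2) * (((|x| + |a|) + |b|) * (|x| ^ k * E)) := by
        exact mul_le_mul_of_nonneg_right hexpb (by positivity)
    _ ≤ _ := mul_le_mul_of_nonneg_left key (Real.exp_pos _).le

private lemma aux_norm_exp (x : ℝ) (z : ℂ) :
    ‖Complex.exp (-((x : ℂ) - z) ^ 2 / 2)‖
      = Real.exp (z.im ^ 2 / 2) * Real.exp (-(x - z.re) ^ 2 / 2) := by
  have hre : ((-((x : ℂ) - z) ^ 2 / 2)).re = -((x - z.re) ^ 2 - z.im ^ 2) / 2 := by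
    simp [Complex.div_re, Complex.normSq, pow_two, Complex.mul_re, Complex.mul_im, Complex.sub_re,
      Complex.sub_im, Complex.ofReal_re, Complex.ofReal_im]
  rw [Complex.norm_exp, hre, ← Real.exp_add]
  congr 1
  ring

section
variable {Ω : Type*} [MeasurableSpace Ω] (X : Ω → ℝ) (μ : Measure Ω) [IsProbabilityMeasure μ]

noncomputable def Mc (k : ℕ) (z : ℂ) : ℂ :=
  ∫ ω, (X ω : ℂ) ^ k * Complex.exp (-((X ω : ℂ) - z) ^ 2 / 2) ∂μ

variable {X}

private lemma aux_meas (hXmeas : Measurable X) (k : ℕ) (z : ℂ) :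
    AEStronglyMeasurable (fun ω => (X ω : ℂ) ^ k * Complex.exp (-((X ω : ℂ) - z) ^ 2 / 2)) μ := by
  apply Measurable.aestronglyMeasurable
  fun_prop

private lemma aux_meas' (hXmeas : Measurable X) (k : ℕ) (z : ℂ) :
    AEStronglyMeasurable
      (fun ω => (X ω : ℂ) ^ k * ((X ω : ℂ) - z) * Complex.exp (-((X ω : ℂ) - z) ^ 2 / 2)) μ := by
  apply Measurable.aestronglyMeasurable
  fun_prop

private lemma aux_int_F (hXmeas : Measurable X) (k : ℕ) (z : ℂ) :
    Integrable (fun ω => (X ω : ℂ) ^ k * Complex.exp (-((X ω : ℂ) - z) ^ 2 / 2)) μ := by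
  refine Integrable.mono'
    (integrable_const (Real.exp (z.im ^ 2 / 2) *
      (2 ^ k * (((k.factorial : ℝ) * 2 ^ k + 1) + |z.re| ^ k)))) (aux_meas μ hXmeas k z)
    (ae_of_all _ fun ω => ?_)
  rw [norm_mul, norm_pow, Complex.norm_real, Real.norm_eq_abs, aux_norm_exp]
  have h := aux_shift_bound k (|z.re|) (abs_nonneg _) (X ω) z.re le_rfl
  calc |X ω| ^ k * (Real.exp (z.im ^ 2 / 2) * Real.exp (-(X ω - z.re) ^ 2 / 2))
      = Real.exp (z.im ^ 2 / 2) * (|X ω| ^ k * Real.exp (-(X ω - z.re) ^ 2 / 2)) := by ring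
    _ ≤ _ := mul_le_mul_of_nonneg_left h (Real.exp_pos _).le

private lemma aux_hasDerivAt_integrand (x : ℝ) (k : ℕ) (z : ℂ) :
    HasDerivAt (fun z : ℂ => (x : ℂ) ^ k * Complex.exp (-((x : ℂ) - z) ^ 2 / 2))
      ((x : ℂ) ^ k * ((x : ℂ) - z) * Complex.exp (-((x : ℂ) - z) ^ 2 / 2)) z := by
  have h1 : HasDerivAt (fun z : ℂ => ((x : ℂ) - z)) (-1) z := (hasDerivAt_id z).const_sub _
  have h2 := ((h1.fun_pow 2).fun_neg.div_const 2).cexp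
  have h3 := h2.const_mul ((x : ℂ) ^ k)
  refine h3.congr_deriv ?_
  ring
end

section
variable {Ω : Type*} [MeasurableSpace Ω] {X : Ω → ℝ} (μ : Measure Ω) [IsProbabilityMeasure μ]

private lemma aux_hasDerivAt_Mc (hXmeas : Measurable X) (k : ℕ) (z₀ : ℂ) :
    HasDerivAt (Mc X μ k) (Mc X μ (k+1) z₀ - z₀ * Mc X μ k z₀) z₀ := by
  set R : ℝ := ‖z₀‖ + 1 with hRdef
  have hR1 : 1 ≤ R := by rw [hRdef]; linarith [norm_nonneg z₀]
  set bound : Ω → ℝ := fun ω =>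
    Real.exp (R ^ 2 / 2) *
      ((2 ^ (k+1) * ((((k+1).factorial : ℝ) * 2 ^ (k+1) + 1) + R ^ (k+1)))
        + 2 * R * (2 ^ k * (((k.factorial : ℝ) * 2 ^ k + 1) + R ^ k))) with hbd
  have key := hasDerivAt_integral_of_dominated_loc_of_deriv_le (μ := μ) (𝕜 := ℂ)
    (F := fun z ω => (X ω : ℂ) ^ k * Complex.exp (-((X ω : ℂ) - z) ^ 2 / 2))
    (F' := fun z ω => (X ω : ℂ) ^ k * ((X ω : ℂ) - z) * Complex.exp (-((X ω : ℂ) - z) ^ 2 / 2))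
    (x₀ := z₀) (bound := bound) (Metric.ball_mem_nhds z₀ one_pos)
    (Eventually.of_forall fun z => aux_meas μ hXmeas k z)
    (aux_int_F μ hXmeas k z₀) (aux_meas' μ hXmeas k z₀)
    (ae_of_all _ fun ω z hz => ?_) (integrable_const _)
    (ae_of_all _ fun ω z _ => aux_hasDerivAt_integrand (X ω) k z)
  · have hint' : Integrable
        (fun ω => (X ω : ℂ) ^ k * ((X ω : ℂ) - z₀) * Complex.exp (-((X ω : ℂ) - z₀) ^ 2 / 2)) μ :=
      key.1
    have hd := key.2
    have heq : (∫ ω, (X ω : ℂ) ^ k * ((X ω : ℂ) - z₀) * Complex.exp (-((X ω : ℂ) - z₀) ^ 2 / 2) ∂μ)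
        = Mc X μ (k+1) z₀ - z₀ * Mc X μ k z₀ := by
      have e1 : (fun ω => (X ω : ℂ) ^ k * ((X ω : ℂ) - z₀) * Complex.exp (-((X ω : ℂ) - z₀) ^ 2 / 2))
          = fun ω => (X ω : ℂ) ^ (k+1) * Complex.exp (-((X ω : ℂ) - z₀) ^ 2 / 2)
            - z₀ * ((X ω : ℂ) ^ k * Complex.exp (-((X ω : ℂ) - z₀) ^ 2 / 2)) := by
        funext ω; rw [pow_succ]; ring
      rw [e1, integral_sub (aux_int_F μ hXmeas (k+1) z₀) ((aux_int_F μ hXmeas k z₀).const_mul z₀),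
        integral_const_mul]
      rfl
    rw [heq] at hd
    exact hd
  · -- bound check
    have hzre : |z.re| ≤ R := by
      have h1 : ‖z‖ ≤ R := by
        have := norm_sub_norm_le z z₀
        have h2 : ‖z - z₀‖ < 1 := by simpa [dist_eq_norm] using hz
        rw [hRdef]; linarith
      exact (Complex.abs_re_le_norm z).trans h1
    have hzim : |z.im| ≤ R := by
      have h1 : ‖z‖ ≤ R := by
        have := norm_sub_norm_le z z₀
        have h2 : ‖z - z₀‖ < 1 := by simpa [dist_eq_norm] using hz
        rw [hRdef]; linarith
      exact (Complex.abs_im_le_norm z).trans h1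
    calc ‖(X ω : ℂ) ^ k * ((X ω : ℂ) - z) * Complex.exp (-((X ω : ℂ) - z) ^ 2 / 2)‖
        ≤ ((|X ω| + |z.re|) + |z.im|) *
            (|X ω| ^ k * (Real.exp (z.im ^ 2 / 2) * Real.exp (-(X ω - z.re) ^ 2 / 2))) :=
          aux_norm_integrand k (X ω) z
      _ ≤ bound ω := by
          have h := aux_bound_main k R hR1 (X ω) z.re z.im hzre hzim
          -- LHS of h has exp (z.im^2/2) form; ours matches
          exact h
end
section
variable {Ω : Type*} [MeasurableSpace Ω] {X : Ω → ℝ} (μ : Measure Ω) [IsProbabilityMeasure μ]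

noncomputable def Mr (X : Ω → ℝ) (μ : Measure Ω) (k : ℕ) (y : ℝ) : ℝ :=
  ∫ ω, X ω ^ k * Real.exp (-(X ω - y) ^ 2 / 2) ∂μ

private lemma Mc_ofReal (k : ℕ) (y : ℝ) : Mc X μ k (y : ℂ) = ((Mr X μ k y : ℝ) : ℂ) := by
  rw [Mc, Mr]
  have h : ∫ ω, ((X ω ^ k * Real.exp (-(X ω - y) ^ 2 / 2) : ℝ) : ℂ) ∂μ
      = ((∫ ω, X ω ^ k * Real.exp (-(X ω - y) ^ 2 / 2) ∂μ : ℝ) : ℂ) := integral_ofReal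
  rw [← h]
  congr 1
  funext ω
  push_cast [Complex.ofReal_exp]
  norm_num

private lemma aux_int_Mr (hXmeas : Measurable X) (k : ℕ) (y : ℝ) :
    Integrable (fun ω => X ω ^ k * Real.exp (-(X ω - y) ^ 2 / 2)) μ := by
  refine Integrable.mono'
    (integrable_const (2 ^ k * (((k.factorial : ℝ) * 2 ^ k + 1) + |y| ^ k)))
    (by apply Measurable.aestronglyMeasurable; fun_prop) (ae_of_all _ fun ω => ?_)
  rw [Real.norm_eq_abs, abs_mul, abs_pow, abs_of_pos (Real.exp_pos _)]
  exact aux_shift_bound k (|y|) (abs_nonneg _) (X ω) y le_rfl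

private lemma aux_hasDerivAt_Mr (hXmeas : Measurable X) (k : ℕ) (y : ℝ) :
    HasDerivAt (Mr X μ k) (Mr X μ (k+1) y - y * Mr X μ k y) y := by
  have h := (aux_hasDerivAt_Mc μ hXmeas k (y : ℂ)).real_of_complex
  have e1 : (fun x : ℝ => (Mc X μ k (x : ℂ)).re) = Mr X μ k := by
    funext x; rw [Mc_ofReal]; simp
  have e2 : (Mc X μ (k+1) (y : ℂ) - (y : ℂ) * Mc X μ k (y : ℂ)).re
      = Mr X μ (k+1) y - y * Mr X μ k y := by
    rw [Mc_ofReal, Mc_ofReal, ← Complex.ofReal_mul, ← Complex.ofReal_sub, Complex.ofReal_re]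
  rw [e1, e2] at h
  exact h

private lemma aux_Mr0_pos (hXmeas : Measurable X) (y : ℝ) : 0 < Mr X μ 0 y := by
  rw [Mr]
  rw [integral_pos_iff_support_of_nonneg_ae (ae_of_all _ fun ω => by positivity)
    (aux_int_Mr μ hXmeas 0 y)]
  have hsupp : (Function.support fun ω => X ω ^ 0 * Real.exp (-(X ω - y) ^ 2 / 2)) = Set.univ := by
    ext ω
    simp [Function.support, Real.exp_ne_zero]
  rw [hsupp]
  simp

private lemma aux_analytic_Mr (hXmeas : Measurable X) (k : ℕ) :
    AnalyticOnNhd ℝ (Mr X μ k) Set.univ := by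
  have hdiff : Differentiable ℂ (Mc X μ k) :=
    fun z => (aux_hasDerivAt_Mc μ hXmeas k z).differentiableAt
  have h1 : AnalyticOnNhd ℂ (Mc X μ k) Set.univ := Complex.analyticOnNhd_univ_iff_differentiable.mpr hdiff
  have h2 : AnalyticOnNhd ℝ (Mc X μ k) Set.univ := h1.restrictScalars
  have h3 : AnalyticOnNhd ℝ (fun y : ℝ => ((y : ℂ))) Set.univ :=
    Complex.ofRealCLM.analyticOnNhd _
  have h4 : AnalyticOnNhd ℝ (fun y : ℝ => Mc X μ k (y : ℂ)) Set.univ :=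
    h2.comp h3 (Set.mapsTo_univ _ _)
  have h5 : AnalyticOnNhd ℝ (fun y : ℝ => (Mc X μ k (y : ℂ)).re) Set.univ :=
    (Complex.reCLM.analyticOnNhd _).comp h4 (Set.mapsTo_univ _ _)
  have e : (fun y : ℝ => (Mc X μ k (y : ℂ)).re) = Mr X μ k := by
    funext y; rw [Mc_ofReal]; simp
  rwa [e] at h5
end

section
private lemma aux_expand {Ω : Type*} [MeasurableSpace Ω] {X : Ω → ℝ} (μ : Measure Ω) [IsProbabilityMeasure μ] (hXmeas : Measurable X) (a : ℝ) (k : ℕ) (y : ℝ) :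
    (∫ ω, (X ω - a) ^ k * Real.exp (-(X ω - y) ^ 2 / 2) ∂μ)
      = ∑ j ∈ Finset.range (k+1), ((k.choose j : ℝ) * (-a) ^ (k-j)) * Mr X μ j y := by
  have e1 : ∀ ω, (X ω - a) ^ k * Real.exp (-(X ω - y) ^ 2 / 2)
      = ∑ j ∈ Finset.range (k+1),
          ((k.choose j : ℝ) * (-a) ^ (k-j)) * (X ω ^ j * Real.exp (-(X ω - y) ^ 2 / 2)) := by
    intro ω
    rw [sub_eq_add_neg, add_pow, Finset.sum_mul]
    exact Finset.sum_congr rfl fun j _ => by ring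
  simp_rw [e1]
  rw [integral_finset_sum _ (fun j _ => ((aux_int_Mr μ hXmeas j y).const_mul _))]
  exact Finset.sum_congr rfl fun j _ => by rw [integral_const_mul]; rfl
end

/-- **Low-order derivatives of the conditional expectation.**
For the scalar Gaussian channel `Y = X + N` with `X` integrable and `N ~ N(0,1)`
independent of `X`, let `f y = E[X | Y = y]` and `g k y = E[(X - f y)^k | Y = y]`
(via the Gaussian-smoothing formula). Then `f` is infinitely differentiable and
`f'' = g₃`, `f''' = g₄ - 3 g₂²`, `f'''' = g₅ - 10 g₂ g₃`. -/
theorem iteratedDeriv_condexp_low_order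
    {Ω : Type*} [MeasurableSpace Ω] (μ : Measure Ω) [IsProbabilityMeasure μ]
    (X N : Ω → ℝ) (hXmeas : Measurable X) (hNmeas : Measurable N)
    (hXint : Integrable X μ)
    (hN : Measure.map N μ = gaussianReal 0 1)
    (hindep : IndepFun X N μ)
    (f : ℝ → ℝ) (g : ℕ → ℝ → ℝ)
    (hf : ∀ y, f y = (∫ ω, X ω * Real.exp (-(X ω - y) ^ 2 / 2) ∂μ) /
        (∫ ω, Real.exp (-(X ω - y) ^ 2 / 2) ∂μ))
    (hg : ∀ k : ℕ, ∀ y, g k y =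
        (∫ ω, (X ω - f y) ^ k * Real.exp (-(X ω - y) ^ 2 / 2) ∂μ) /
        (∫ ω, Real.exp (-(X ω - y) ^ 2 / 2) ∂μ)) :
    ContDiff ℝ (⊤ : ℕ∞) f ∧ ∀ y : ℝ,
      iteratedDeriv 2 f y = g 3 y ∧
      iteratedDeriv 3 f y = g 4 y - 3 * (g 2 y) ^ 2 ∧
      iteratedDeriv 4 f y = g 5 y - 10 * g 2 y * g 3 y := by
  have hM0pos : ∀ y, 0 < Mr X μ 0 y := aux_Mr0_pos μ hXmeas
  have hM0 : ∀ y, Mr X μ 0 y ≠ 0 := fun y => (hM0pos y).ne'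
  have hM0eq : ∀ y : ℝ, (∫ ω, Real.exp (-(X ω - y) ^ 2 / 2) ∂μ) = Mr X μ 0 y := by
    intro y; simp only [Mr, pow_zero, one_mul]
  set c : ℕ → ℝ → ℝ := fun k y => Mr X μ k y / Mr X μ 0 y with hcdef
  have hf1 : f = c 1 := by
    funext y
    rw [hf y, hM0eq, hcdef]
    simp only [Mr, pow_one]
  have hc0 : ∀ y, c 0 y = 1 := fun y => div_self (hM0 y)
  -- derivative of c k
  have hcd : ∀ (k : ℕ) (y : ℝ), HasDerivAt (c k) (c (k+1) y - c 1 y * c k y) y := by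
    intro k y
    have h := (aux_hasDerivAt_Mr μ hXmeas k y).div (aux_hasDerivAt_Mr μ hXmeas 0 y) (hM0 y)
    norm_num at h
    have e : ((Mr X μ (k+1) y - y * Mr X μ k y) * Mr X μ 0 y
        - Mr X μ k y * (Mr X μ 1 y - y * Mr X μ 0 y)) / Mr X μ 0 y ^ 2
        = c (k+1) y - c 1 y * c k y := by
      rw [hcdef]
      field_simp [hM0 y]
      ring
    rw [e] at h
    exact h
  -- g in terms of c
  have hgc : ∀ (k : ℕ) (y : ℝ), g k y
      = ∑ j ∈ Finset.range (k+1), ((k.choose j : ℝ) * (-(c 1 y)) ^ (k-j)) * c j y := by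
    intro k y
    rw [hg k y, hM0eq, aux_expand μ hXmeas (f y) k y, Finset.sum_div]
    refine Finset.sum_congr rfl fun j _ => ?_
    rw [hf1, mul_div_assoc]
  have hg2 : ∀ y, g 2 y = c 2 y - c 1 y ^ 2 := by
    intro y
    rw [hgc 2 y]
    simp [Finset.sum_range_succ, hc0 y]
    ring
  have hg3 : ∀ y, g 3 y = c 3 y - 3 * c 1 y * c 2 y + 2 * c 1 y ^ 3 := by
    intro y
    rw [hgc 3 y]
    simp [Finset.sum_range_succ, hc0 y]
    ring
  have hg4 : ∀ y, g 4 y = c 4 y - 4 * c 1 y * c 3 y + 6 * c 1 y ^ 2 * c 2 y - 3 * c 1 y ^ 4 := by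
    intro y
    rw [hgc 4 y]
    simp [Finset.sum_range_succ, hc0 y, Nat.choose]
    ring
  have hg5 : ∀ y, g 5 y = c 5 y - 5 * c 1 y * c 4 y + 10 * c 1 y ^ 2 * c 3 y
      - 10 * c 1 y ^ 3 * c 2 y + 4 * c 1 y ^ 5 := by
    intro y
    rw [hgc 5 y]
    simp [Finset.sum_range_succ, hc0 y, Nat.choose]
    ring
  -- smoothness
  have hcf : ContDiff ℝ (⊤ : ℕ∞) f := by
    have hfa : AnalyticOnNhd ℝ f Set.univ := by
      rw [hf1, hcdef]
      exact (aux_analytic_Mr μ hXmeas 1).div (aux_analytic_Mr μ hXmeas 0) (fun y _ => hM0 y)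
    exact hfa.contDiff
  -- first derivative
  have hd1 : ∀ y, HasDerivAt f (c 2 y - c 1 y ^ 2) y := by
    intro y
    rw [hf1]
    have h := hcd 1 y
    convert h using 1
    norm_num
    ring
  have hder1 : deriv f = fun y => c 2 y - c 1 y ^ 2 := funext fun y => (hd1 y).deriv
  -- second derivative
  have hd2 : ∀ y, HasDerivAt (fun y => c 2 y - c 1 y ^ 2)
      (c 3 y - 3 * c 1 y * c 2 y + 2 * c 1 y ^ 3) y := by
    intro y
    have h := (hcd 2 y).fun_sub ((hcd 1 y).fun_pow 2)
    refine h.congr_deriv ?_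
    norm_num
    ring
  have hder2 : iteratedDeriv 2 f = fun y => c 3 y - 3 * c 1 y * c 2 y + 2 * c 1 y ^ 3 := by
    rw [iteratedDeriv_succ, iteratedDeriv_one, hder1]
    funext y
    exact (hd2 y).deriv
  -- third derivative
  have hd3 : ∀ y, HasDerivAt (fun y => c 3 y - 3 * c 1 y * c 2 y + 2 * c 1 y ^ 3)
      (c 4 y - 4 * c 1 y * c 3 y - 3 * c 2 y ^ 2 + 12 * c 1 y ^ 2 * c 2 y - 6 * c 1 y ^ 4) y := by
    intro y
    have h := ((hcd 3 y).fun_sub (((hcd 1 y).const_mul 3).fun_mul (hcd 2 y))).fun_add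
      (((hcd 1 y).fun_pow 3).const_mul 2)
    refine h.congr_deriv ?_
    norm_num
    ring
  have hder3 : iteratedDeriv 3 f
      = fun y => c 4 y - 4 * c 1 y * c 3 y - 3 * c 2 y ^ 2 + 12 * c 1 y ^ 2 * c 2 y
        - 6 * c 1 y ^ 4 := by
    show iteratedDeriv (2 + 1) f = _
    rw [iteratedDeriv_succ, hder2]
    funext y
    exact (hd3 y).deriv
  -- fourth derivative
  have hd4 : ∀ y, HasDerivAt
      (fun y => c 4 y - 4 * c 1 y * c 3 y - 3 * c 2 y ^ 2 + 12 * c 1 y ^ 2 * c 2 y - 6 * c 1 y ^ 4)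
      (c 5 y - 5 * c 1 y * c 4 y - 10 * c 2 y * c 3 y + 20 * c 1 y ^ 2 * c 3 y
        + 30 * c 1 y * c 2 y ^ 2 - 60 * c 1 y ^ 3 * c 2 y + 24 * c 1 y ^ 5) y := by
    intro y
    have h := ((((hcd 4 y).fun_sub (((hcd 1 y).const_mul 4).fun_mul (hcd 3 y))).fun_sub
      (((hcd 2 y).fun_pow 2).const_mul 3)).fun_add
      ((((hcd 1 y).fun_pow 2).const_mul 12).fun_mul (hcd 2 y))).fun_sub (((hcd 1 y).fun_pow 4).const_mul 6)
    refine h.congr_deriv ?_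
    norm_num
    ring
  have hder4 : iteratedDeriv 4 f
      = fun y => c 5 y - 5 * c 1 y * c 4 y - 10 * c 2 y * c 3 y + 20 * c 1 y ^ 2 * c 3 y
        + 30 * c 1 y * c 2 y ^ 2 - 60 * c 1 y ^ 3 * c 2 y + 24 * c 1 y ^ 5 := by
    show iteratedDeriv (3 + 1) f = _
    rw [iteratedDeriv_succ, hder3]
    funext y
    exact (hd4 y).deriv
  refine ⟨hcf, fun y => ⟨?_, ?_, ?_⟩⟩
  · rw [hder2, hg3 y]
  · rw [hder3, hg4 y, hg2 y]
    ring
  · rw [hder4, hg5 y, hg2 y, hg3 y]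
    ring
end
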